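/- arXiv:2101.01365 — 2 statements merged into one kernel-verified Lean document; each statement's English description precedes it below -/
import Mathlib

section
/- Let n > 0 with consecutive-ones binary expansion exponents β_1 > ... > β_r ≥ 0 and partial sums n_k (n_{r+1}=0). Fix k with β := β_k > 0 and let 1 ≤ s ≤ n satisfy n − s ≥ n_{k+1}. Then there exists an integer j_0 ≥ 0 such that s ≤ ⌊s/2⌋ + 2^{β−1} + j_0·2^β ≤ n and s ≤ ⌈s/2⌉ + 2^{β−1} + j_0·2^β ≤ n. -/
/-!
With `a = n_{k+1} ≥ 0` and `n_k = 2^β - a`, the expansion gives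
`n ≡ (-1)^k (2^β - a) mod 2^{β+1}`, so `n + a` or `n - a` is an odd multiple of `2^β`, i.e. equals
`2x` with `x = 2^{β-1} + j₀ 2^β` and `j₀ ≥ 0`. As `|2x - n| ≤ a ≤ n - s`, both `⌊s/2⌋ + x` and
`⌈s/2⌉ + x` lie in `[s, n]`; that `2x` is even absorbs the rounding up in `⌈s/2⌉`.
-/

/-- An alternating binary expansion of `n`: `n = ∑ i ∈ range r, (-1)^i * 2^(β i)`
with strictly decreasing nonnegative exponents `β 0 > β 1 > ⋯ > β (r-1) ≥ 0`. -/
def IsAltExpansion (n r : ℕ) (β : ℕ → ℕ) : Prop :=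
  (∀ i j : ℕ, i < j → j < r → β j < β i) ∧
  (n : ℤ) = ∑ i ∈ Finset.range r, (-1 : ℤ) ^ i * 2 ^ (β i)

/-- The consecutive-ones binary expansion: an alternating expansion of minimal length `r`. -/
def IsConsOnesExpansion (n r : ℕ) (β : ℕ → ℕ) : Prop :=
  IsAltExpansion n r β ∧ ∀ r' β', IsAltExpansion n r' β' → r ≤ r'

open Finset

/-- The paper's `n_k`. -/
def altTail (r : ℕ) (β : ℕ → ℕ) (k : ℕ) : ℤ :=
  ∑ i ∈ Ico k r, (-1 : ℤ) ^ (i - k) * 2 ^ (β i)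

section altTail

variable {r : ℕ} {β : ℕ → ℕ} {k : ℕ}

theorem altTail_of_le (h : r ≤ k) : altTail r β k = 0 := by
  rw [altTail, Ico_eq_empty_of_le h, sum_empty]

theorem altTail_eq_sub (h : k < r) : altTail r β k = 2 ^ β k - altTail r β (k + 1) := by
  rw [altTail, altTail, sum_eq_sum_Ico_succ_bot h, Nat.sub_self, pow_zero, one_mul,
    sub_eq_add_neg, ← sum_neg_distrib]
  refine congrArg _ (sum_congr rfl fun i hi => ?_)
  rw [show i - k = i - (k + 1) + 1 by grind, pow_succ]
  ring

theorem altTail_mem_Icc (hβ : ∀ i, i + 1 < r → β (i + 1) ≤ β i) (k : ℕ) :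
    altTail r β k ∈ Set.Icc 0 (2 ^ β k) := by
  rcases le_or_gt r k with hrk | hkr
  · rw [altTail_of_le hrk]
    exact ⟨le_rfl, by positivity⟩
  · have ih := altTail_mem_Icc hβ (k + 1)
    have hnext : altTail r β (k + 1) ≤ 2 ^ β k := by
      rcases lt_or_ge (k + 1) r with hk1 | hk1
      · exact ih.2.trans (pow_le_pow_right₀ one_le_two (hβ k hk1))
      · rw [altTail_of_le hk1]
        positivity
    rw [altTail_eq_sub hkr]
    constructor <;> linarith [ih.1]
termination_by r - k

theorem sum_range_eq_add_altTail (hk : k ≤ r) :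
    ∑ i ∈ range r, (-1 : ℤ) ^ i * 2 ^ (β i) =
      ∑ i ∈ range k, (-1 : ℤ) ^ i * 2 ^ (β i) + (-1) ^ k * altTail r β k := by
  rw [range_eq_Ico, range_eq_Ico, ← sum_Ico_consecutive _ k.zero_le hk, altTail, mul_sum]
  refine congrArg _ (sum_congr rfl fun i hi => ?_)
  rw [← mul_assoc, ← pow_add, Nat.add_sub_cancel' (mem_Ico.1 hi).1]

theorem IsAltExpansion.two_pow_succ_dvd_sub_altTail {n : ℕ} (h : IsAltExpansion n r β)
    (hk : k < r) : (2 : ℤ) ^ (β k + 1) ∣ n - (-1) ^ k * altTail r β k := by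
  rw [h.2, sum_range_eq_add_altTail hk.le, add_sub_cancel_right]
  exact dvd_sum fun i hi => (pow_dvd_pow 2 (h.1 i k (mem_range.1 hi) hk)).mul_left _

end altTail

theorem exists_two_mul_mem_Icc_of_dvd {b : ℕ} {n a ε : ℤ} (hb : 0 < b) (ha : 0 ≤ a)
    (han : a ≤ n) (hε : ε = 1 ∨ ε = -1) (hdvd : (2 : ℤ) ^ (b + 1) ∣ n - ε * (2 ^ b - a)) :
    ∃ j : ℕ, 2 * ((2 ^ (b - 1) + j * 2 ^ b : ℕ) : ℤ) ∈ Set.Icc (n - a) (n + a) := by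
  obtain ⟨q, hq⟩ : ∃ q : ℤ, n + ε * a = 2 ^ b * (2 * q + 1) := by
    obtain ⟨d, hd⟩ := hdvd
    rcases hε with rfl | rfl
    · exact ⟨d, by linear_combination hd⟩
    · exact ⟨d - 1, by linear_combination hd⟩
  have hε_mem : n + ε * a ∈ Set.Icc (n - a) (n + a) := by
    rcases hε with rfl | rfl <;> constructor <;> linarith
  have hq0 : 0 ≤ 2 * q + 1 :=
    nonneg_of_mul_nonneg_right (a := 2 ^ b) (by linarith [hε_mem.1]) (by positivity)
  lift q to ℕ using by omega
  have hpow : 2 * (2 : ℤ) ^ (b - 1) = 2 ^ b := by rw [← pow_succ', Nat.sub_add_cancel hb]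
  refine ⟨q, ?_⟩
  convert hε_mem using 1
  push_cast
  linear_combination hpow - hq

theorem consOnes_j0_exists_general (n r : ℕ) (β : ℕ → ℕ)
    (h : IsConsOnesExpansion n r β) (nk : ℕ → ℤ)
    (hnk : ∀ k, nk k = ∑ i ∈ Finset.Ico k r, (-1 : ℤ) ^ (i - k) * 2 ^ (β i))
    (k : ℕ) (hk : k < r) (hβ : 0 < β k)
    (s : ℕ) (hns : (n : ℤ) - s ≥ nk (k + 1)) :
    ∃ j₀ : ℕ,
      (s ≤ s / 2 + 2 ^ (β k - 1) + j₀ * 2 ^ (β k) ∧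
        s / 2 + 2 ^ (β k - 1) + j₀ * 2 ^ (β k) ≤ n) ∧
      (s ≤ (s + 1) / 2 + 2 ^ (β k - 1) + j₀ * 2 ^ (β k) ∧
        (s + 1) / 2 + 2 ^ (β k - 1) + j₀ * 2 ^ (β k) ≤ n) := by
  obtain ⟨hexp, -⟩ := h
  obtain rfl : nk = altTail r β := funext hnk
  have ha := (altTail_mem_Icc (fun i hi => (hexp.1 i (i + 1) i.lt_succ_self hi).le) (k + 1)).1
  have hdvd := hexp.two_pow_succ_dvd_sub_altTail hk
  rw [altTail_eq_sub hk] at hdvd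
  obtain ⟨j, hlo, hhi⟩ :=
    exists_two_mul_mem_Icc_of_dvd hβ ha (by omega) (neg_one_pow_eq_or ℤ k) hdvd
  refine ⟨j, ?_⟩
  simp only [add_assoc]
  generalize 2 ^ (β k - 1) + j * 2 ^ β k = x at hlo hhi
  omega

/-- Lemma `j0lemma`: if `β = β_k > 0` and `1 ≤ s ≤ n` with `n - s ≥ n_{k+1}`, there is
`j₀ ≥ 0` with `s ≤ ⌊s/2⌋ + 2^{β-1} + j₀2^β ≤ n` and `s ≤ ⌈s/2⌉ + 2^{β-1} + j₀2^β ≤ n`. -/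
theorem consOnes_j0_exists (n r : ℕ) (β : ℕ → ℕ) (hn : 0 < n)
    (h : IsConsOnesExpansion n r β) (nk : ℕ → ℤ)
    (hnk : ∀ k, nk k = ∑ i ∈ Finset.Ico k r, (-1 : ℤ) ^ (i - k) * 2 ^ (β i))
    (k : ℕ) (hk : k < r) (hβ : 0 < β k)
    (s : ℕ) (hs1 : 1 ≤ s) (hs2 : s ≤ n) (hns : (n : ℤ) - s ≥ nk (k + 1)) :
    ∃ j₀ : ℕ,
      (s ≤ s / 2 + 2 ^ (β k - 1) + j₀ * 2 ^ (β k) ∧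
        s / 2 + 2 ^ (β k - 1) + j₀ * 2 ^ (β k) ≤ n) ∧
      (s ≤ (s + 1) / 2 + 2 ^ (β k - 1) + j₀ * 2 ^ (β k) ∧
        (s + 1) / 2 + 2 ^ (β k - 1) + j₀ * 2 ^ (β k) ≤ n) :=
  consOnes_j0_exists_general n r β h nk hnk k hk hβ s hns
end

section
/- Let K be a field of characteristic 2, G a cyclic 2-group of order q with index-2 subgroup H, and U a finite-dimensional K[H]-module. Then there is an isomorphism of K[G]-modules S²(Ind_H^G U) ≅ Ind_H^G(S²(U)) ⊕ TenInd_H^G(U), where TenInd_H^G(U) is the tensor-induced module: as a K[H]-module it is U ⊗ U, and a generator g of G acts by g·(v ⊗ w) = g²w ⊗ v. -/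
/-!
Naturally `S²(A ⊕ B) ≅ S²A ⊕ S²B ⊕ (A ⊗ B)`: the tensor square of `A ⊕ B` splits into
`A ⊗ A`, `B ⊗ B`, `A ⊗ B` and `B ⊗ A`, and symmetrising identifies the last two. For
`Ind_H^G U = U ⊕ gU` the generator `g` exchanges the two summands, twisting by `g²`; on
`S²U ⊕ S²(gU)` this is the action on `Ind_H^G S²U`, and on the mixed part
`U ⊗ gU` it is `v ⊗ w ↦ g²w ⊗ v`, the tensor-induced module.
-/

open TensorProduct

noncomputable section

variable (K : Type*) [Field K]

/-- The single nilpotent Jordan block of size `n` on `K^n`: sends the `i`-th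
standard basis vector `v i` to `v (i-1)` (and `v 1` to `0`). -/
def jordanShift (n : ℕ) : (Fin n → K) →ₗ[K] (Fin n → K) where
  toFun f := fun i => if h : (i : ℕ) + 1 < n then f ⟨(i : ℕ) + 1, h⟩ else 0
  map_add' f g := by funext i; by_cases h : (i : ℕ) + 1 < n <;> simp [h]
  map_smul' c f := by funext i; by_cases h : (i : ℕ) + 1 < n <;> simp [h]

/-- The basis vector `v j` of `K^n` for `1 ≤ j ≤ n`, with the convention
`v j = 0` for `j ≤ 0` or `j > n`. -/
def basisVec (n : ℕ) (j : ℤ) : Fin n → K :=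
  if h : 1 ≤ j ∧ j ≤ (n : ℤ) then Pi.single (⟨(j - 1).toNat, by omega⟩ : Fin n) 1 else 0

def tensorSquareAction (n : ℕ) :
    ((Fin n → K) ⊗[K] (Fin n → K)) →ₗ[K] ((Fin n → K) ⊗[K] (Fin n → K)) :=
  LinearMap.rTensor (Fin n → K) (jordanShift K n) +
    LinearMap.lTensor (Fin n → K) (jordanShift K n)

/-- The kernel of the natural surjection `V ⊗ V → Λ²(V)`, namely the span of the
vectors `v ⊗ v`.  In characteristic two `Λ²(V) ≅ (V ⊗ V) / altSubmodule K V`. -/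
def altSubmodule (V : Type*) [AddCommGroup V] [Module K V] : Submodule K (V ⊗[K] V) :=
  Submodule.span K {x | ∃ v : V, x = v ⊗ₜ[K] v}

/-- The kernel of the natural surjection `V ⊗ V → S²(V)`, namely the span of the
vectors `v ⊗ w - w ⊗ v`.  Thus `S²(V) ≅ (V ⊗ V) / symSubmodule K V`. -/
def symSubmodule (V : Type*) [AddCommGroup V] [Module K V] : Submodule K (V ⊗[K] V) :=
  Submodule.span K {x | ∃ v w : V, x = v ⊗ₜ[K] w - w ⊗ₜ[K] v}

abbrev SymSquare (V : Type*) [AddCommGroup V] [Module K V] : Type _ :=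
  (V ⊗[K] V) ⧸ symSubmodule K V

namespace SymSquare

variable {K} {V W : Type*} [AddCommGroup V] [Module K V] [AddCommGroup W] [Module K W]

theorem symSubmodule_le_ker {M : Type*} [AddCommGroup M] [Module K M] {f : V ⊗[K] V →ₗ[K] M}
    (hf : ∀ v w : V, f (v ⊗ₜ w) = f (w ⊗ₜ v)) : symSubmodule K V ≤ LinearMap.ker f := by
  rw [symSubmodule, Submodule.span_le]
  rintro _ ⟨v, w, rfl⟩
  simp [hf v w]

theorem mk_tmul_comm (v w : V) :
    (Submodule.Quotient.mk (v ⊗ₜ w) : SymSquare K V) = Submodule.Quotient.mk (w ⊗ₜ v) :=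
  (Submodule.Quotient.eq _).2 (Submodule.subset_span ⟨v, w, rfl⟩)

def map (f : V →ₗ[K] W) : SymSquare K V →ₗ[K] SymSquare K W :=
  (symSubmodule K V).liftQ ((symSubmodule K W).mkQ ∘ₗ TensorProduct.map f f)
    (symSubmodule_le_ker fun v w => by simpa using mk_tmul_comm (f v) (f w))

@[simp]
theorem map_mk (f : V →ₗ[K] W) (x : V ⊗[K] V) :
    map f (Submodule.Quotient.mk x) = Submodule.Quotient.mk (TensorProduct.map f f x) :=
  rfl

/-- The tensor square of `V × W` split into its `V ⊗ V`, `W ⊗ W` and mixed parts; the two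
mixed parts `V ⊗ W` and `W ⊗ V` are identified, which is what the symmetric square does. -/
def prodSplit : (V × W) ⊗[K] (V × W) →ₗ[K] (SymSquare K V × SymSquare K W) × (V ⊗[K] W) :=
  (((symSubmodule K V).mkQ ∘ₗ TensorProduct.map (.fst K V W) (.fst K V W)).prod
      ((symSubmodule K W).mkQ ∘ₗ TensorProduct.map (.snd K V W) (.snd K V W))).prod
    (TensorProduct.map (.fst K V W) (.snd K V W) +
      TensorProduct.map (.fst K V W) (.snd K V W) ∘ₗ (TensorProduct.comm K _ _).toLinearMap)

@[simp]
theorem prodSplit_tmul (a c : V) (b d : W) :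
    prodSplit ((a, b) ⊗ₜ[K] (c, d)) =
      ((Submodule.Quotient.mk (a ⊗ₜ c), Submodule.Quotient.mk (b ⊗ₜ d)), a ⊗ₜ d + c ⊗ₜ b) :=
  rfl

def prodEquiv : SymSquare K (V × W) ≃ₗ[K] (SymSquare K V × SymSquare K W) × (V ⊗[K] W) :=
  LinearEquiv.ofLinearMap
    ((symSubmodule K (V × W)).liftQ prodSplit (symSubmodule_le_ker fun ⟨a, b⟩ ⟨c, d⟩ => by
      simp [mk_tmul_comm a c, mk_tmul_comm b d, add_comm]))
    (((map (.inl K V W)).coprod (map (.inr K V W))).coprod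
      ((symSubmodule K (V × W)).mkQ ∘ₗ TensorProduct.map (.inl K V W) (.inr K V W)))
    (by
      refine LinearMap.prod_ext (LinearMap.prod_ext ?_ ?_) (TensorProduct.ext' fun x y => ?_)
      iterate 2
        exact Submodule.linearMap_qext _ (TensorProduct.ext' fun x y => by simp)
      simp)
    (by
      refine Submodule.linearMap_qext _ (TensorProduct.ext' fun ⟨a, b⟩ ⟨c, d⟩ => ?_)
      have hab : ((a, b) : V × W) = LinearMap.inl K V W a + LinearMap.inr K V W b := by simp
      have hcd : ((c, d) : V × W) = LinearMap.inl K V W c + LinearMap.inr K V W d := by simp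
      simp only [LinearMap.comp_apply, Submodule.mkQ_apply, Submodule.liftQ_apply, prodSplit_tmul,
        LinearMap.coprod_apply, map_mk, map_add, TensorProduct.map_tmul, LinearMap.id_apply]
      rw [mk_tmul_comm (LinearMap.inl K V W c), hab, hcd]
      simp only [add_tmul, tmul_add, Submodule.Quotient.mk_add]
      abel)

end SymSquare

section Induction

variable {K} {U : Type*} [AddCommGroup U] [Module K U]

/-- The generator `g` of `G` acting on `Ind_H^G U = U ⊕ g U`, where `h` is the action of `g²`. -/
def inducedOperator (h : U →ₗ[K] U) : U × U →ₗ[K] U × U :=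
  (h ∘ₗ LinearMap.snd K U U).prod (LinearMap.fst K U U)

/-- The generator `g` of `G` acting on the tensor-induced module `U ⊗ U`. -/
def tensorInducedOperator (h : U →ₗ[K] U) : U ⊗[K] U →ₗ[K] U ⊗[K] U :=
  TensorProduct.map h LinearMap.id ∘ₗ (TensorProduct.comm K U U).toLinearMap

theorem prodEquiv_comp_map_inducedOperator (h : U →ₗ[K] U) :
    SymSquare.prodEquiv.toLinearMap ∘ₗ SymSquare.map (inducedOperator h) =
      (inducedOperator (SymSquare.map h)).prodMap (tensorInducedOperator h) ∘ₗ
        SymSquare.prodEquiv.toLinearMap := by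
  refine Submodule.linearMap_qext _ (TensorProduct.ext' fun ⟨a, b⟩ ⟨c, d⟩ => ?_)
  simp [inducedOperator, tensorInducedOperator, SymSquare.prodEquiv, add_comm]

end Induction

/-- `σ`, `fS`, `τ` and `t` are the actions of the generator `g` on `Ind_H^G U`,
`S²(Ind_H^G U)`, `Ind_H^G S²U` and `TenInd_H^G U`; `h` and `hS` are those of `g²` on `U`
and `S²U`. -/
theorem symmetricSquare_of_induced
    {U : Type*} [AddCommGroup U] [Module K U]
    (h : U →ₗ[K] U)
    (σ : (U × U) →ₗ[K] (U × U)) (hσ : ∀ v w : U, σ (v, w) = (h w, v))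
    (fS : (((U × U) ⊗[K] (U × U)) ⧸ symSubmodule K (U × U)) →ₗ[K]
        (((U × U) ⊗[K] (U × U)) ⧸ symSubmodule K (U × U)))
    (hfS : ∀ x, fS (Submodule.Quotient.mk x) =
        Submodule.Quotient.mk (TensorProduct.map σ σ x))
    (hS : ((U ⊗[K] U) ⧸ symSubmodule K U) →ₗ[K] ((U ⊗[K] U) ⧸ symSubmodule K U))
    (hhS : ∀ x, hS (Submodule.Quotient.mk x) =
        Submodule.Quotient.mk (TensorProduct.map h h x))
    (τ : (((U ⊗[K] U) ⧸ symSubmodule K U) × ((U ⊗[K] U) ⧸ symSubmodule K U)) →ₗ[K]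
        (((U ⊗[K] U) ⧸ symSubmodule K U) × ((U ⊗[K] U) ⧸ symSubmodule K U)))
    (hτ : ∀ v w, τ (v, w) = (hS w, v))
    (t : (U ⊗[K] U) →ₗ[K] (U ⊗[K] U)) (ht : ∀ v w : U, t (v ⊗ₜ[K] w) = h w ⊗ₜ[K] v) :
    ∃ φ : (((U × U) ⊗[K] (U × U)) ⧸ symSubmodule K (U × U)) ≃ₗ[K]
        ((((U ⊗[K] U) ⧸ symSubmodule K U) × ((U ⊗[K] U) ⧸ symSubmodule K U)) ×
          (U ⊗[K] U)),
      ∀ x, φ (fS x) = (LinearMap.prodMap τ t) (φ x) := by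
  obtain rfl : σ = inducedOperator h := LinearMap.ext fun ⟨v, w⟩ => hσ v w
  obtain rfl : fS = SymSquare.map (inducedOperator h) :=
    Submodule.linearMap_qext _ (LinearMap.ext hfS)
  obtain rfl : hS = SymSquare.map h := Submodule.linearMap_qext _ (LinearMap.ext hhS)
  obtain rfl : τ = inducedOperator (SymSquare.map h) := LinearMap.ext fun ⟨v, w⟩ => hτ v w
  obtain rfl : t = tensorInducedOperator h := TensorProduct.ext' ht
  exact ⟨SymSquare.prodEquiv, LinearMap.congr_fun (prodEquiv_comp_map_inducedOperator h)⟩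

end
end
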